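/- Suppose X ∼ Bernoulli(p) with p ∈ [1/2, 1), P_{Y|X} = BIBO(α,β) with α, β ∈ [0, 1/2), ᾱp̄ > βp, and αᾱp̄² ≥ ββ̄p². Then for every ε ∈ [p, ᾱp̄ + β̄p], h(P_{XY}, ε) = 1 − ζ̃(ε) q̄, where q̄ = 1 − (αp̄ + β̄p) and ζ̃(ε) := (ᾱp̄ + β̄p − ε)/(ᾱp̄ − βp). Moreover this value is achieved by the reverse Z-channel filter with crossover probability ζ̃(ε), i.e. the binary filter with P(Z=1|Y=1)=1, P(Z=1|Y=0)=ζ̃(ε), P(Z=0|Y=0)=1−ζ̃(ε), which satisfies 𝒫 = ε and 𝒰 = 1 − ζ̃(ε)q̄. -/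
import Mathlib


noncomputable section

/-- A row-stochastic matrix (channel) from an `n`-ary input to a `k`-ary output. -/
def IsStoch {n k : ℕ} (F : Fin n → Fin k → ℝ) : Prop :=
  (∀ y z, 0 ≤ F y z) ∧ ∀ y, ∑ z, F y z = 1

/-- A joint pmf on `{1,…,m} × {1,…,n}`. -/
def IsPmf {m n : ℕ} (P : Fin m → Fin n → ℝ) : Prop :=
  (∀ x y, 0 ≤ P x y) ∧ ∑ x, ∑ y, P x y = 1

/-- `P_c(X) = max_x P_X(x)`. -/
def pcX {m n : ℕ} (P : Fin m → Fin n → ℝ) : ℝ := ⨆ x, ∑ y, P x y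

/-- `P_c(Y) = max_y P_Y(y)`. -/
def pcY {m n : ℕ} (P : Fin m → Fin n → ℝ) : ℝ := ⨆ y, ∑ x, P x y

/-- `P_c(X|Y) = Σ_y max_x P_{XY}(x,y)`. -/
def pcXgY {m n : ℕ} (P : Fin m → Fin n → ℝ) : ℝ := ∑ y, ⨆ x, P x y

/-- `𝒫(F) = P_c(X|Z) = Σ_z max_x Σ_y P_{XY}(x,y) F(y,z)` for a filter `F = P_{Z|Y}`
under the Markov chain `X – Y – Z`. -/
def privP {m n k : ℕ} (P : Fin m → Fin n → ℝ) (F : Fin n → Fin k → ℝ) : ℝ :=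
  ∑ z, ⨆ x, ∑ y, P x y * F y z

/-- `𝒰(F) = P_c(Y|Z) = Σ_z max_y P_Y(y) F(y,z)` for a filter `F = P_{Z|Y}`. -/
def privU {m n k : ℕ} (P : Fin m → Fin n → ℝ) (F : Fin n → Fin k → ℝ) : ℝ :=
  ∑ z, ⨆ y, (∑ x, P x y) * F y z

/-- The set `ℱ` of privacy filters: `n × (n+1)` row-stochastic matrices. -/
def filtSet (n : ℕ) : Set (Fin n → Fin (n + 1) → ℝ) := {F | IsStoch F}

/-- The privacy-aware guessing function
`h(P_{XY}, ε) = max { 𝒰(F) : F ∈ ℱ, 𝒫(F) ≤ ε }`. -/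
def hFun {m n : ℕ} (P : Fin m → Fin n → ℝ) (ε : ℝ) : ℝ :=
  sSup {u | ∃ F ∈ filtSet n, privP P F ≤ ε ∧ privU P F = u}

/-- The joint pmf of `(X, Y)` when `X ∼ Bernoulli(p)` (i.e. `P(X=1) = p`) and
`P_{Y|X} = BIBO(α, β)`, i.e. `P(Y=1|X=0) = α` and `P(Y=0|X=1) = β`. -/
def binJoint (p α β : ℝ) : Fin 2 → Fin 2 → ℝ := fun x y =>
  if x = 0 then (if y = 0 then (1 - p) * (1 - α) else (1 - p) * α)
  else (if y = 0 then p * β else p * (1 - β))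

/-- The reverse Z-channel filter with crossover probability `γ`: `P(Z=1|Y=1) = 1`,
`P(Z=1|Y=0) = γ`, `P(Z=0|Y=0) = 1 - γ`, viewed as an element of `ℱ`
(2×3 matrix, third column zero). -/
def revZFilter (γ : ℝ) : Fin 2 → Fin 3 → ℝ := fun y z =>
  if y = 1 then (if z = 1 then 1 else 0)
  else (if z = 1 then γ else if z = 0 then 1 - γ else 0)

lemma iSup_fin2 (f : Fin 2 → ℝ) : (⨆ x, f x) = max (f 0) (f 1) := by
  apply le_antisymm
  · exact ciSup_le (fun x => by fin_cases x <;> simp [le_max_left, le_max_right])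
  · exact max_le (le_ciSup (Set.Finite.bddAbove (Set.finite_range f)) 0)
      (le_ciSup (Set.Finite.bddAbove (Set.finite_range f)) 1)

lemma privP_expand (p α β : ℝ) (F : Fin 2 → Fin 3 → ℝ) :
    privP (binJoint p α β) F =
      max ((1-p)*(1-α) * F 0 0 + (1-p)*α * F 1 0) (p*β * F 0 0 + p*(1-β) * F 1 0)
      + max ((1-p)*(1-α) * F 0 1 + (1-p)*α * F 1 1) (p*β * F 0 1 + p*(1-β) * F 1 1)
      + max ((1-p)*(1-α) * F 0 2 + (1-p)*α * F 1 2) (p*β * F 0 2 + p*(1-β) * F 1 2) := by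
  simp [privP, Fin.sum_univ_three, Fin.sum_univ_two, iSup_fin2, binJoint]

lemma privU_expand (p α β : ℝ) (F : Fin 2 → Fin 3 → ℝ) :
    privU (binJoint p α β) F =
      max (((1-p)*(1-α) + p*β) * F 0 0) (((1-p)*α + p*(1-β)) * F 1 0)
      + max (((1-p)*(1-α) + p*β) * F 0 1) (((1-p)*α + p*(1-β)) * F 1 1)
      + max (((1-p)*(1-α) + p*β) * F 0 2) (((1-p)*α + p*(1-β)) * F 1 2) := by
  simp [privU, Fin.sum_univ_three, Fin.sum_univ_two, iSup_fin2, binJoint]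

lemma col_ineq (u v s t a b : ℝ) (hs : 0 ≤ s) (hv : 0 ≤ v)
    (hb : 0 ≤ b) (hreg : s * t ≤ u * v) :
    (v+s)*s*a + ((v+s)*t - (v-s)*(u+t))*b ≤
      (v+s) * max (v*a+u*b) (s*a+t*b) - (v-s) * max ((v+s)*a) ((u+t)*b) := by
  rcases le_total ((v+s)*a) ((u+t)*b) with h | h
  · rw [max_eq_right h]
    have h1 : (v+s)*(s*a+t*b) ≤ (v+s) * max (v*a+u*b) (s*a+t*b) :=
      mul_le_mul_of_nonneg_left (le_max_right _ _) (by linarith)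
    nlinarith
  · rw [max_eq_left h]
    have h1 : (v+s)*(v*a+u*b) ≤ (v+s) * max (v*a+u*b) (s*a+t*b) :=
      mul_le_mul_of_nonneg_left (le_max_left _ _) (by linarith)
    nlinarith

lemma qq_aux (u v s t : ℝ) (hu : 0 ≤ u) (hs : 0 ≤ s) (huv : u < v) (hst : s < t)
    (hpq : v + u ≤ s + t) (hreg : s * t ≤ u * v) : v + s ≤ u + t := by
  nlinarith [sq_nonneg (t - s), sq_nonneg (v - u), mul_pos (sub_pos.2 huv) (sub_pos.2 hst)]

set_option maxHeartbeats 1600000 in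
/-- Binary case, regime `α ᾱ p̄² ≥ β β̄ p²`: for every `ε ∈ [p, ᾱ p̄ + β̄ p]`,
`h(P_{XY}, ε) = 1 - ζ̃(ε) q̄`, where `q̄ = 1 - (α p̄ + β̄ p)` and
`ζ̃(ε) = (ᾱ p̄ + β̄ p - ε)/(ᾱ p̄ - β p)`; moreover this value is achieved by the
reverse Z-channel filter with crossover probability `ζ̃(ε)`, which satisfies `𝒫 = ε`
and `𝒰 = 1 - ζ̃(ε) q̄`. -/
theorem hFun_binary_reverse_zchannel (p α β : ℝ)
    (hp : p ∈ Set.Ico (1 / 2 : ℝ) 1)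
    (hα : α ∈ Set.Ico (0 : ℝ) (1 / 2)) (hβ : β ∈ Set.Ico (0 : ℝ) (1 / 2))
    (hnd : (1 - α) * (1 - p) > β * p)
    (hreg : α * (1 - α) * (1 - p) ^ 2 ≥ β * (1 - β) * p ^ 2)
    (ε : ℝ) (hε : ε ∈ Set.Icc p ((1 - α) * (1 - p) + (1 - β) * p)) :
    hFun (binJoint p α β) ε =
        1 - ((1 - α) * (1 - p) + (1 - β) * p - ε) / ((1 - α) * (1 - p) - β * p)
              * (1 - (α * (1 - p) + (1 - β) * p)) ∧
    IsStoch (revZFilter (((1 - α) * (1 - p) + (1 - β) * p - ε) / ((1 - α) * (1 - p) - β * p))) ∧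
    privP (binJoint p α β)
        (revZFilter (((1 - α) * (1 - p) + (1 - β) * p - ε) / ((1 - α) * (1 - p) - β * p))) = ε ∧
    privU (binJoint p α β)
        (revZFilter (((1 - α) * (1 - p) + (1 - β) * p - ε) / ((1 - α) * (1 - p) - β * p))) =
      1 - ((1 - α) * (1 - p) + (1 - β) * p - ε) / ((1 - α) * (1 - p) - β * p)
            * (1 - (α * (1 - p) + (1 - β) * p)) := by
  obtain ⟨hp1, hp2⟩ := hp
  obtain ⟨hα1, hα2⟩ := hα
  obtain ⟨hβ1, hβ2⟩ := hβ
  obtain ⟨hε1, hε2⟩ := hε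
  obtain ⟨u, hu_def⟩ : ∃ u : ℝ, u = (1-p)*α := ⟨_, rfl⟩
  obtain ⟨v, hv_def⟩ : ∃ v : ℝ, v = (1-p)*(1-α) := ⟨_, rfl⟩
  obtain ⟨s, hs_def⟩ : ∃ s : ℝ, s = p*β := ⟨_, rfl⟩
  obtain ⟨t, ht_def⟩ : ∃ t : ℝ, t = p*(1-β) := ⟨_, rfl⟩
  have hD : (0:ℝ) < v - s := by rw [hv_def, hs_def]; nlinarith
  have hu0 : 0 ≤ u := by rw [hu_def]; nlinarith
  have hv0 : 0 ≤ v := by rw [hv_def]; nlinarith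
  have hs0 : 0 ≤ s := by rw [hs_def]; nlinarith
  have huv : u < v := by rw [hu_def, hv_def]; nlinarith
  have hst : s < t := by rw [hs_def, ht_def]; nlinarith
  have hsum : u + v = 1 - p := by rw [hu_def, hv_def]; ring
  have hsum2 : s + t = p := by rw [hs_def, ht_def]; ring
  have hregv : s * t ≤ u * v := by rw [hu_def, hv_def, hs_def, ht_def]; nlinarith
  have hqq : v + s ≤ u + t := qq_aux u v s t hu0 hs0 huv hst (by linarith) hregv
  have h1 : u + v + s + t = 1 := by linarith
  have hM : (1 - α) * (1 - p) + (1 - β) * p = v + t := by rw [hv_def, ht_def]; ring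
  have hDid : (1 - α) * (1 - p) - β * p = v - s := by rw [hv_def, hs_def]; ring
  have hqbar : 1 - (α * (1 - p) + (1 - β) * p) = v + s := by
    rw [hv_def, hs_def]; ring
  obtain ⟨ζ, hζ_def⟩ : ∃ ζ : ℝ,
      ζ = ((1 - α) * (1 - p) + (1 - β) * p - ε) / ((1 - α) * (1 - p) - β * p) := ⟨_, rfl⟩
  have hζ_eq : ζ = (v + t - ε) / (v - s) := by rw [hζ_def, hM, hDid]
  have hζD : ζ * (v - s) = v + t - ε := by
    rw [hζ_eq]; field_simp
  have hε2' : ε ≤ v + t := hM ▸ hε2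
  have hε1' : s + t ≤ ε := by linarith
  have hζ0 : 0 ≤ ζ := by
    rw [hζ_eq]; apply div_nonneg _ hD.le; linarith
  have hζ1 : ζ ≤ 1 := by
    rw [hζ_eq, div_le_one hD]; linarith
  obtain ⟨G, hG_def⟩ : ∃ G, G = revZFilter ζ := ⟨_, rfl⟩
  have g00 : G 0 0 = 1 - ζ := by simp [hG_def, revZFilter]
  have g01 : G 0 1 = ζ := by simp [hG_def, revZFilter]
  have g02 : G 0 2 = 0 := by simp [hG_def, revZFilter]
  have g10 : G 1 0 = 0 := by simp [hG_def, revZFilter]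
  have g11 : G 1 1 = 1 := by simp [hG_def, revZFilter]
  have g12 : G 1 2 = 0 := by simp [hG_def, revZFilter]
  have hGstoch : IsStoch G := by
    constructor
    · intro y z
      fin_cases y <;> fin_cases z <;>
        simp [hG_def, revZFilter] <;> linarith
    · intro y
      fin_cases y <;> simp [IsStoch, Fin.sum_univ_three, hG_def, revZFilter]
  have hPG : privP (binJoint p α β) G = ε := by
    rw [privP_expand, g00, g01, g02, g10, g11, g12,
        ← hu_def, ← hv_def, ← hs_def, ← ht_def]
    have m1 : max (v*(1-ζ) + u*0) (s*(1-ζ) + t*0) = v*(1-ζ) + u*0 := by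
      apply max_eq_left
      have : s*(1-ζ) ≤ v*(1-ζ) := mul_le_mul_of_nonneg_right (by linarith : s ≤ v) (by linarith)
      linarith
    have m2 : max (v*ζ + u*1) (s*ζ + t*1) = s*ζ + t*1 := by
      apply max_eq_right; linarith [hζD]
    have m3 : max (v*0 + u*0) (s*0 + t*0) = s*0 + t*0 := by norm_num
    rw [m1, m2, m3]; linarith [hζD]
  have hUG : privU (binJoint p α β) G = 1 - ζ * (v + s) := by
    rw [privU_expand, g00, g01, g02, g10, g11, g12,
        ← hu_def, ← hv_def, ← hs_def, ← ht_def]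
    have m1 : max ((v+s)*(1-ζ)) ((u+t)*0) = (v+s)*(1-ζ) := by
      apply max_eq_left
      have : 0 ≤ (v+s)*(1-ζ) := mul_nonneg (by linarith) (by linarith)
      linarith
    have m2 : max ((v+s)*ζ) ((u+t)*1) = (u+t)*1 := by
      apply max_eq_right
      have : (v+s)*ζ ≤ (v+s)*1 := mul_le_mul_of_nonneg_left hζ1 (by linarith)
      linarith
    have m3 : max ((v+s)*0) ((u+t)*0) = (u+t)*0 := by norm_num
    rw [m1, m2, m3]
    linear_combination h1
  have hconv : ∀ F : Fin 2 → Fin 3 → ℝ, IsStoch F → privP (binJoint p α β) F ≤ ε →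
      privU (binJoint p α β) F ≤ 1 - ζ * (v + s) := by
    intro F hF hPF
    obtain ⟨hFnn, hFrow⟩ := hF
    have hr0 : F 0 0 + F 0 1 + F 0 2 = 1 := by
      have := hFrow 0; rwa [Fin.sum_univ_three] at this
    have hr1 : F 1 0 + F 1 1 + F 1 2 = 1 := by
      have := hFrow 1; rwa [Fin.sum_univ_three] at this
    have key : ∀ z : Fin 3,
        (v+s)*s*(F 0 z) + ((v+s)*t - (v-s)*(u+t))*(F 1 z) ≤
          (v+s) * max (v*(F 0 z)+u*(F 1 z)) (s*(F 0 z)+t*(F 1 z))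
            - (v-s) * max ((v+s)*(F 0 z)) ((u+t)*(F 1 z)) := fun z =>
      col_ineq u v s t (F 0 z) (F 1 z) hs0 hv0 (hFnn 1 z) hregv
    have hPexp := privP_expand p α β F
    have hUexp := privU_expand p α β F
    rw [← hu_def, ← hv_def, ← hs_def, ← ht_def] at hPexp hUexp
    obtain ⟨PP, hPP⟩ : ∃ x, privP (binJoint p α β) F = x := ⟨_, rfl⟩
    obtain ⟨PU, hPU⟩ : ∃ x, privU (binJoint p α β) F = x := ⟨_, rfl⟩
    rw [hPP] at hPexp hPF
    rw [hPU] at hUexp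
    rw [hPU]
    have e0 : (v+s)*s*(F 0 0) + (v+s)*s*(F 0 1) + (v+s)*s*(F 0 2) = (v+s)*s := by
      have : (v+s)*s*(F 0 0) + (v+s)*s*(F 0 1) + (v+s)*s*(F 0 2)
          = (v+s)*s*(F 0 0 + F 0 1 + F 0 2) := by ring
      rw [this, hr0, mul_one]
    have e1 : ((v+s)*t - (v-s)*(u+t))*(F 1 0) + ((v+s)*t - (v-s)*(u+t))*(F 1 1)
        + ((v+s)*t - (v-s)*(u+t))*(F 1 2) = (v+s)*t - (v-s)*(u+t) := by
      have : ((v+s)*t - (v-s)*(u+t))*(F 1 0) + ((v+s)*t - (v-s)*(u+t))*(F 1 1)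
          + ((v+s)*t - (v-s)*(u+t))*(F 1 2)
          = ((v+s)*t - (v-s)*(u+t))*(F 1 0 + F 1 1 + F 1 2) := by ring
      rw [this, hr1, mul_one]
    have hsummed : (v+s)*s + ((v+s)*t - (v-s)*(u+t)) ≤
        (v+s) * PP - (v-s) * PU := by
      rw [hPexp, hUexp]
      have k0 := key 0; have k1 := key 1; have k2 := key 2
      have expand : (v+s) * (max (v*(F 0 0)+u*(F 1 0)) (s*(F 0 0)+t*(F 1 0))
            + max (v*(F 0 1)+u*(F 1 1)) (s*(F 0 1)+t*(F 1 1))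
            + max (v*(F 0 2)+u*(F 1 2)) (s*(F 0 2)+t*(F 1 2)))
          - (v-s) * (max ((v+s)*(F 0 0)) ((u+t)*(F 1 0))
            + max ((v+s)*(F 0 1)) ((u+t)*(F 1 1))
            + max ((v+s)*(F 0 2)) ((u+t)*(F 1 2)))
          = ((v+s) * max (v*(F 0 0)+u*(F 1 0)) (s*(F 0 0)+t*(F 1 0))
              - (v-s) * max ((v+s)*(F 0 0)) ((u+t)*(F 1 0)))
          + ((v+s) * max (v*(F 0 1)+u*(F 1 1)) (s*(F 0 1)+t*(F 1 1))
              - (v-s) * max ((v+s)*(F 0 1)) ((u+t)*(F 1 1)))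
          + ((v+s) * max (v*(F 0 2)+u*(F 1 2)) (s*(F 0 2)+t*(F 1 2))
              - (v-s) * max ((v+s)*(F 0 2)) ((u+t)*(F 1 2))) := by ring
      rw [expand]
      linarith [e0, e1]
    have hPle : (v+s) * PP ≤ (v+s) * ε :=
      mul_le_mul_of_nonneg_left hPF (by linarith)
    have h2 : ζ * (v - s) * (v + s) = (v + t - ε) * (v + s) := by rw [hζD]
    have h3 : (v-s)*(u+t) = (v-s)*(1-(v+s)) := by
      rw [show u+t = 1-(v+s) from by linarith]
    have hfin : (v-s) * PU ≤ (v-s) * (1 - ζ*(v+s)) := by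
      linarith [hsummed, hPle, h2, h3]
    exact le_of_mul_le_mul_left hfin hD
  have hval : hFun (binJoint p α β) ε = 1 - ζ * (v + s) := by
    have hset : IsGreatest {w | ∃ F ∈ filtSet 2, privP (binJoint p α β) F ≤ ε ∧
        privU (binJoint p α β) F = w} (1 - ζ * (v + s)) := by
      constructor
      · exact ⟨G, hGstoch, le_of_eq hPG, hUG⟩
      · rintro w ⟨F, hF, hPF, rfl⟩
        exact hconv F hF hPF
    exact hset.csSup_eq
  rw [← hζ_def, hqbar, ← hG_def]
  exact ⟨hval, hG_def ▸ hGstoch, hPG, hUG⟩
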